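/- arXiv:2602.08618 — 2 statements merged into one kernel-verified Lean document; each statement's English description precedes it below -/
import Mathlib

section
/- Let L > 0, let f : ℝ^n → ℝ be L-smooth convex, and let (x_k) be the gradient descent sequence with initial point x₀ and constant step sizes η_i = 1/L, so a_k = k/L. Define q_k := −(x_k − x₀)/a_k for k ≥ 1. Then: (a) q_k ∈ dom f* for every k ≥ 1; (b) if p⋆ ∈ dom f* and D := D_f(x₀, p⋆), then for every k ≥ 1, ‖q_k − p⋆‖² ≤ 8LD/k, and moreover if D > 0 then ‖q_k‖² − ‖p⋆‖² ≤ 2LD·(C₀ + log k)/k, where C₀ := 1 + (‖∇f(x₀)‖² − ‖p⋆‖²)/(2LD). -/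
open scoped InnerProductSpace
open Filter Topology

/-- Legendre–Fenchel conjugate of `f`, valued in `ℝ ∪ {∞}` (modeled in `EReal`). -/
noncomputable def fconj {n : ℕ} (f : EuclideanSpace ℝ (Fin n) → ℝ)
    (p : EuclideanSpace ℝ (Fin n)) : EReal :=
  ⨆ x : EuclideanSpace ℝ (Fin n), ((⟪p, x⟫_ℝ - f x : ℝ) : EReal)

/-- Effective domain `dom f*` of the Legendre–Fenchel conjugate. -/
noncomputable def fconjDom {n : ℕ} (f : EuclideanSpace ℝ (Fin n) → ℝ) :
    Set (EuclideanSpace ℝ (Fin n)) := {p | fconj f p < ⊤}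

/-- Dual divergence `D_f(x, p) = f x + f*(p) − ⟨p, x⟩` (meaningful for `p ∈ dom f*`). -/
noncomputable def dualDiv {n : ℕ} (f : EuclideanSpace ℝ (Fin n) → ℝ)
    (x p : EuclideanSpace ℝ (Fin n)) : ℝ :=
  f x + (fconj f p).toReal - ⟪p, x⟫_ℝ

/-- `f` is `L`-smooth convex: convex, differentiable, with `L`-Lipschitz gradient. -/
def LSmoothConvex {n : ℕ} (L : ℝ) (f : EuclideanSpace ℝ (Fin n) → ℝ) : Prop :=
  ConvexOn ℝ Set.univ f ∧ Differentiable ℝ f ∧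
    LipschitzWith (Real.toNNReal L) (fun x => gradient f x)


section Aux
variable {F : Type*} [NormedAddCommGroup F] [InnerProductSpace ℝ F] [CompleteSpace F]


variable {F : Type*} [NormedAddCommGroup F] [InnerProductSpace ℝ F] [CompleteSpace F]

lemma line_hasDerivAt (f : F → ℝ) (hf : Differentiable ℝ f) (x v : F) (t : ℝ) :
    HasDerivAt (fun s : ℝ => f (x + s • v)) ⟪gradient f (x + t • v), v⟫_ℝ t := by
  have h1 : HasDerivAt (fun s : ℝ => x + s • v) v t := by
    simpa using ((hasDerivAt_id t).smul_const v).const_add x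
  have h2 : HasFDerivAt f (InnerProductSpace.toDual ℝ F (gradient f (x + t • v))) (x + t • v) := by
    exact hasGradientAt_iff_hasFDerivAt.mp (hf (x + t • v)).hasGradientAt
  have h3 := h2.comp_hasDerivAt t h1
  simpa [InnerProductSpace.toDual_apply_apply, Function.comp_def] using h3

/-- First-order condition for convexity. -/
lemma convex_grad_le (f : F → ℝ) (hc : ConvexOn ℝ Set.univ f) (hf : Differentiable ℝ f)
    (x y : F) : f x + ⟪gradient f x, y - x⟫_ℝ ≤ f y := by
  set φ : ℝ → ℝ := fun s => f (x + s • (y - x)) with hφ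
  have hd : ∀ t : ℝ, HasDerivAt φ ⟪gradient f (x + t • (y - x)), y - x⟫_ℝ t :=
    line_hasDerivAt f hf x (y - x)
  have hφc : ConvexOn ℝ Set.univ φ := by
    have h := hc.comp_affineMap (AffineMap.lineMap x y : ℝ →ᵃ[ℝ] F)
    have he : φ = f ∘ ⇑(AffineMap.lineMap x y) := by
      funext s
      simp [hφ, AffineMap.lineMap_apply]
      congr 1
      module
    rw [he]
    simpa using h
  have hslope := hφc.le_slope_of_hasDerivAt (Set.mem_univ (0:ℝ)) (Set.mem_univ (1:ℝ))
    one_pos (by simpa using hd 0)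
  have : slope φ 0 1 = f y - f x := by
    simp [slope, hφ]
  rw [this] at hslope
  simpa using by linarith [hslope]

variable {F : Type*} [NormedAddCommGroup F] [InnerProductSpace ℝ F] [CompleteSpace F]


/-- Descent lemma. -/
lemma descent_lemma (f : F → ℝ) {L : ℝ} (hL : 0 < L) (hf : Differentiable ℝ f)
    (hlip : LipschitzWith (Real.toNNReal L) (fun z => gradient f z)) (x y : F) :
    f y ≤ f x + ⟪gradient f x, y - x⟫_ℝ + L / 2 * ‖y - x‖ ^ 2 := by
  set v := y - x with hv
  set ψ : ℝ → ℝ := fun t => f (x + t • v) - t * ⟪gradient f x, v⟫_ℝ - L * t ^ 2 / 2 * ‖v‖ ^ 2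
    with hψ
  have hd : ∀ t : ℝ, HasDerivAt ψ
      (⟪gradient f (x + t • v), v⟫_ℝ - ⟪gradient f x, v⟫_ℝ - L * t * ‖v‖ ^ 2) t := by
    intro t
    have h1 := line_hasDerivAt f hf x v t
    have h2 : HasDerivAt (fun s : ℝ => s * ⟪gradient f x, v⟫_ℝ) ⟪gradient f x, v⟫_ℝ t := by
      simpa using (hasDerivAt_id t).mul_const ⟪gradient f x, v⟫_ℝ
    have h3 : HasDerivAt (fun s : ℝ => L * s ^ 2 / 2 * ‖v‖ ^ 2) (L * t * ‖v‖ ^ 2) t := by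
      have := ((hasDerivAt_pow 2 t).const_mul L).div_const 2
      have h4 := this.mul_const (‖v‖ ^ 2)
      exact h4.congr_deriv (by push_cast; ring)
    exact (h1.sub h2).sub h3
  have hanti : AntitoneOn ψ (Set.Icc (0:ℝ) 1) := by
    apply antitoneOn_of_deriv_nonpos (convex_Icc 0 1)
    · exact (fun t _ => (hd t).continuousAt.continuousWithinAt)
    · intro t _
      exact ((hd t).differentiableAt).differentiableWithinAt
    · intro t ht
      rw [interior_Icc, Set.mem_Ioo] at ht
      rw [(hd t).deriv]
      have hlt : ‖gradient f (x + t • v) - gradient f x‖ ≤ L * (t * ‖v‖) := by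
        have := hlip.dist_le_mul (x + t • v) x
        rw [dist_eq_norm, dist_eq_norm] at this
        simp only [add_sub_cancel_left] at this
        calc ‖gradient f (x + t • v) - gradient f x‖ ≤ (Real.toNNReal L : ℝ) * ‖t • v‖ := this
          _ = L * (t * ‖v‖) := by
              rw [Real.coe_toNNReal _ hL.le, norm_smul, Real.norm_eq_abs, abs_of_pos ht.1]
      have hinner : ⟪gradient f (x + t • v) - gradient f x, v⟫_ℝ ≤ L * t * ‖v‖ ^ 2 := by
        calc ⟪gradient f (x + t • v) - gradient f x, v⟫_ℝ
            ≤ ‖gradient f (x + t • v) - gradient f x‖ * ‖v‖ := real_inner_le_norm _ _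
          _ ≤ L * (t * ‖v‖) * ‖v‖ := by
              apply mul_le_mul_of_nonneg_right hlt (norm_nonneg v)
          _ = L * t * ‖v‖ ^ 2 := by ring
      rw [inner_sub_left] at hinner
      linarith
  have h01 := hanti (Set.mem_Icc.mpr ⟨le_refl 0, zero_le_one⟩)
    (Set.mem_Icc.mpr ⟨zero_le_one, le_refl 1⟩) zero_le_one
  simp only [hψ, zero_smul, add_zero, one_smul, zero_mul, one_mul, zero_pow, mul_zero,
    sub_zero, one_pow, mul_one] at h01
  have hxy : x + v = y := by rw [hv]; abel
  rw [hxy] at h01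
  linarith

variable {F : Type*} [NormedAddCommGroup F] [InnerProductSpace ℝ F] [CompleteSpace F]



/-- Bregman lower bound for smooth convex functions. -/
lemma bregman_lb (f : F → ℝ) {L : ℝ} (hL : 0 < L) (hc : ConvexOn ℝ Set.univ f)
    (hf : Differentiable ℝ f)
    (hlip : LipschitzWith (Real.toNNReal L) (fun z => gradient f z)) (x y : F) :
    f y + ⟪gradient f y, x - y⟫_ℝ + 1 / (2 * L) * ‖gradient f x - gradient f y‖ ^ 2 ≤ f x := by
  set gx := gradient f x
  set gy := gradient f y
  set z := x - (1 / L) • (gx - gy) with hz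
  have h1 := descent_lemma f hL hf hlip x z
  have h2 := convex_grad_le f hc hf y z
  have hzx : z - x = -((1 / L) • (gx - gy)) := by rw [hz]; abel
  have hnzx : ‖z - x‖ ^ 2 = (1 / L) ^ 2 * ‖gx - gy‖ ^ 2 := by
    rw [hzx, norm_neg, norm_smul, mul_pow, Real.norm_eq_abs,
      abs_of_pos (by positivity : (0:ℝ) < 1 / L)]
  have hiz : ⟪gx, z - x⟫_ℝ = -(1 / L) * ⟪gx, gx - gy⟫_ℝ := by
    rw [hzx, inner_neg_right, real_inner_smul_right]; ring
  have hizy : ⟪gy, z - y⟫_ℝ = ⟪gy, x - y⟫_ℝ - (1 / L) * ⟪gy, gx - gy⟫_ℝ := by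
    have : z - y = (x - y) - (1 / L) • (gx - gy) := by rw [hz]; abel
    rw [this, inner_sub_right, real_inner_smul_right]
  rw [hiz, hnzx] at h1
  rw [hizy] at h2
  have hexp : ⟪gx, gx - gy⟫_ℝ - ⟪gy, gx - gy⟫_ℝ = ‖gx - gy‖ ^ 2 := by
    rw [← inner_sub_left, real_inner_self_eq_norm_sq]
  have hL2 : (0:ℝ) < 2 * L := by positivity
  have key : 1 / L * ⟪gx, gx - gy⟫_ℝ - 1 / L * ⟪gy, gx - gy⟫_ℝ = 1 / L * ‖gx - gy‖ ^ 2 := by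
    rw [← mul_sub, hexp]
  set N := ‖gx - gy‖ ^ 2 with hN
  have hc1 : L / 2 * ((1 / L) ^ 2 * N) = 1 / (2 * L) * N := by
    field_simp
  have hc2 : 1 / L * N = 1 / (2 * L) * N + 1 / (2 * L) * N := by
    field_simp
    ring
  linarith [h1, h2, key, hc1, hc2]

end Aux

section Conj
open Finset



variable {n : ℕ} {f : EuclideanSpace ℝ (Fin n) → ℝ} {p : EuclideanSpace ℝ (Fin n)}

lemma le_fconj (y : EuclideanSpace ℝ (Fin n)) :
    ((⟪p, y⟫_ℝ - f y : ℝ) : EReal) ≤ fconj f p := by unfold fconj; exact le_iSup (fun x : EuclideanSpace ℝ (Fin n) => ((⟪p, x⟫_ℝ - f x : ℝ) : EReal)) y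

lemma fconj_le {c : ℝ} (h : ∀ y, ⟪p, y⟫_ℝ - f y ≤ c) : fconj f p ≤ (c : EReal) :=
  iSup_le fun y => EReal.coe_le_coe_iff.mpr (h y)

lemma mem_fconjDom_of_le {c : ℝ} (h : ∀ y, ⟪p, y⟫_ℝ - f y ≤ c) : p ∈ fconjDom f :=
  lt_of_le_of_lt (fconj_le h) (EReal.coe_lt_top c)

lemma fconj_ne_bot : fconj f p ≠ ⊥ :=
  fun h => by simpa [h] using le_fconj (f := f) (p := p) 0

lemma fconj_eq_toReal (hp : p ∈ fconjDom f) : fconj f p = ((fconj f p).toReal : EReal) :=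
  (EReal.coe_toReal (LT.lt.ne hp) fconj_ne_bot).symm

/-- Real Fenchel–Young. -/
lemma fenchel_young (hp : p ∈ fconjDom f) (y : EuclideanSpace ℝ (Fin n)) :
    ⟪p, y⟫_ℝ - f y ≤ (fconj f p).toReal := by
  have := le_fconj (f := f) (p := p) y
  rw [fconj_eq_toReal hp] at this
  exact EReal.coe_le_coe_iff.mp this

lemma fconj_grad (hc : ConvexOn ℝ Set.univ f) (hf : Differentiable ℝ f)
    (x : EuclideanSpace ℝ (Fin n)) :
    fconj f (gradient f x) = ((⟪gradient f x, x⟫_ℝ - f x : ℝ) : EReal) := by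
  refine le_antisymm (fconj_le fun y => ?_) (le_fconj x)
  have h := convex_grad_le f hc hf x y
  rw [inner_sub_right] at h
  linarith

lemma grad_mem_fconjDom (hc : ConvexOn ℝ Set.univ f) (hf : Differentiable ℝ f)
    (x : EuclideanSpace ℝ (Fin n)) : gradient f x ∈ fconjDom f := by
  unfold fconjDom; rw [Set.mem_setOf_eq, fconj_grad hc hf x]; exact EReal.coe_lt_top _

lemma fconj_grad_toReal (hc : ConvexOn ℝ Set.univ f) (hf : Differentiable ℝ f)
    (x : EuclideanSpace ℝ (Fin n)) :
    (fconj f (gradient f x)).toReal = ⟪gradient f x, x⟫_ℝ - f x := by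
  rw [fconj_grad hc hf x, EReal.toReal_coe]

/-- Strengthened Fenchel–Young via smoothness. -/
lemma fenchel_young_strong {L : ℝ} (hL : 0 < L) (hf : Differentiable ℝ f)
    (hlip : LipschitzWith (Real.toNNReal L) (fun z => gradient f z))
    (hp : p ∈ fconjDom f) (x : EuclideanSpace ℝ (Fin n)) :
    ⟪p, x⟫_ℝ - f x + 1 / (2 * L) * ‖gradient f x - p‖ ^ 2 ≤ (fconj f p).toReal := by
  set g := gradient f x with hg
  set y := x + (1 / L) • (p - g) with hy
  have h1 := descent_lemma f hL hf hlip x y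
  have h2 := fenchel_young hp y
  have hyx : y - x = (1 / L) • (p - g) := by rw [hy]; abel
  have e1 : ⟪g, y - x⟫_ℝ = 1 / L * ⟪g, p - g⟫_ℝ := by rw [hyx, real_inner_smul_right]
  have e2 : ‖y - x‖ ^ 2 = (1 / L) ^ 2 * ‖p - g‖ ^ 2 := by
    rw [hyx, norm_smul, mul_pow, Real.norm_eq_abs, abs_of_pos (by positivity : (0:ℝ) < 1 / L)]
  have e3 : ⟪p, y⟫_ℝ = ⟪p, x⟫_ℝ + 1 / L * ⟪p, p - g⟫_ℝ := by
    rw [hy, inner_add_right, real_inner_smul_right]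
  have e4 : ⟪p, p - g⟫_ℝ - ⟪g, p - g⟫_ℝ = ‖p - g‖ ^ 2 := by
    rw [← inner_sub_left, real_inner_self_eq_norm_sq]
  have e5 : ‖gradient f x - p‖ ^ 2 = ‖p - g‖ ^ 2 := by rw [hg, ← norm_neg]; congr 1; abel
  rw [e1, e2] at h1
  rw [e3] at h2
  rw [e5]
  have hc1 : 1 / L * ⟪p, p - g⟫_ℝ - 1 / L * ⟪g, p - g⟫_ℝ = 1 / L * ‖p - g‖ ^ 2 := by
    rw [← mul_sub, e4]
  have hc2 : L / 2 * ((1 / L) ^ 2 * ‖p - g‖ ^ 2) = 1 / (2 * L) * ‖p - g‖ ^ 2 := by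
    field_simp
  have hc3 : 1 / L * ‖p - g‖ ^ 2 = 1 / (2 * L) * ‖p - g‖ ^ 2 + 1 / (2 * L) * ‖p - g‖ ^ 2 := by
    field_simp; ring
  linarith

lemma fconjDom_convex : Convex ℝ (fconjDom f) := by
  intro p hp q hq a b ha hb hab
  apply mem_fconjDom_of_le (c := a * (fconj f p).toReal + b * (fconj f q).toReal)
  intro y
  have h1 := fenchel_young hp y
  have h2 := fenchel_young hq y
  have e : ⟪a • p + b • q, y⟫_ℝ = a * ⟪p, y⟫_ℝ + b * ⟪q, y⟫_ℝ := by
    rw [inner_add_left, real_inner_smul_left, real_inner_smul_left]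
  rw [e]
  have : a * f y + b * f y = f y := by rw [← add_mul, hab, one_mul]
  nlinarith [mul_le_mul_of_nonneg_left h1 ha, mul_le_mul_of_nonneg_left h2 hb]

/-- Variational inequality for the minimal norm point. -/
lemma var_ineq {pstar : EuclideanSpace ℝ (Fin n)}
    (hps : pstar ∈ closure (fconjDom f))
    (hmin : ∀ q ∈ closure (fconjDom f), ‖pstar‖ ≤ ‖q‖)
    {q : EuclideanSpace ℝ (Fin n)} (hq : q ∈ closure (fconjDom f)) :
    ‖pstar‖ ^ 2 ≤ ⟪q, pstar⟫_ℝ := by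
  have hconv : Convex ℝ (closure (fconjDom f)) := fconjDom_convex.closure
  set c := ⟪pstar, q - pstar⟫_ℝ with hc
  have key : ∀ t : ℝ, 0 < t → t ≤ 1 → 0 ≤ 2 * c + t * ‖q - pstar‖ ^ 2 := by
    intro t ht ht1
    have hmem : pstar + t • (q - pstar) ∈ closure (fconjDom f) := by
      have := hconv hps hq (by linarith : (0:ℝ) ≤ 1 - t) ht.le (by ring)
      convert this using 1
      module
    have hle := hmin _ hmem
    have hsq : ‖pstar‖ ^ 2 ≤ ‖pstar + t • (q - pstar)‖ ^ 2 := by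
      apply pow_le_pow_left₀ (norm_nonneg _) hle
    rw [norm_add_sq_real, norm_smul, real_inner_smul_right, Real.norm_eq_abs,
      abs_of_pos ht, mul_pow] at hsq
    nlinarith [hsq, ht]
  rcases le_or_gt 0 c with h | h
  · have : ⟪q, pstar⟫_ℝ = c + ‖pstar‖ ^ 2 := by
      rw [hc, inner_sub_right, real_inner_self_eq_norm_sq, real_inner_comm]; ring
    linarith
  · exfalso
    have hqp : q ≠ pstar := by
      intro he; rw [he] at hc; simp at hc; linarith [hc, h]
    have hpos : 0 < ‖q - pstar‖ ^ 2 := by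
      have h0 : q - pstar ≠ 0 := sub_ne_zero_of_ne hqp
      exact pow_pos (by rwa [norm_pos_iff]) 2
    set t := min 1 (-c / ‖q - pstar‖ ^ 2) with htt
    have htpos : 0 < t := lt_min one_pos (div_pos (neg_pos.mpr h) hpos)
    have ht1 : t ≤ 1 := min_le_left _ _
    have := key t htpos ht1
    have h2 : t * ‖q - pstar‖ ^ 2 ≤ -c := by
      calc t * ‖q - pstar‖ ^ 2 ≤ (-c / ‖q - pstar‖ ^ 2) * ‖q - pstar‖ ^ 2 :=
            mul_le_mul_of_nonneg_right (min_le_right _ _) hpos.le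
        _ = -c := div_mul_cancel₀ _ hpos.ne'
    linarith

lemma sqrt_harm : ∀ m : ℕ, ∑ j ∈ range (m + 1), 1 / Real.sqrt (j + 1) ≤
    2 * Real.sqrt (m + 1) - 1 := by
  intro m
  induction m with
  | zero => norm_num [Real.sqrt_one]
  | succ m ih =>
    rw [sum_range_succ]
    have key : 1 / Real.sqrt (m + 1 + 1) ≤ 2 * Real.sqrt (m + 2) - 2 * Real.sqrt (m + 1) := by
      set a := Real.sqrt (m + 1) with hadef
      set b := Real.sqrt (m + 2) with hbdef
      have ha2 : a ^ 2 = (m:ℝ) + 1 := Real.sq_sqrt (by positivity)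
      have hb2 : b ^ 2 = (m:ℝ) + 2 := Real.sq_sqrt (by positivity)
      have ha : 0 < a := Real.sqrt_pos.mpr (by positivity)
      have hb : 0 < b := Real.sqrt_pos.mpr (by positivity)
      have hab : a ≤ b := Real.sqrt_le_sqrt (by linarith)
      have hba : (b - a) * (b + a) = 1 := by nlinarith [ha2, hb2]
      have h1 : (1:ℝ) ≤ 2 * b ^ 2 - 2 * a * b := by nlinarith [hba, sq_nonneg (b - a)]
      have : (m:ℝ) + 1 + 1 = (m:ℝ) + 2 := by ring
      rw [this, ← hbdef]
      rw [div_le_iff₀ hb]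
      nlinarith [h1]
    have hcast : ((m + 1 : ℕ) : ℝ) + 1 = (m:ℝ) + 2 := by push_cast; ring
    rw [hcast]
    have hcast2 : ((m:ℝ) + 1 + 1) = (m:ℝ) + 2 := by ring
    rw [hcast2] at key
    linarith [ih, key]

lemma sqrt_harm' (k : ℕ) (hk : 1 ≤ k) :
    1 + ∑ j ∈ range (k - 1), 1 / Real.sqrt (j + 1) ≤ 2 * Real.sqrt k := by
  rcases k with _ | m
  · omega
  rcases m with _ | l
  · norm_num [Real.sqrt_one]
  · have h1 : l + 1 + 1 - 1 = l + 1 := by omega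
    rw [h1]
    have := sqrt_harm l
    have hle : Real.sqrt ((l:ℝ) + 1) ≤ Real.sqrt ((l + 1 + 1 : ℕ) : ℝ) := by
      apply Real.sqrt_le_sqrt; push_cast; linarith
    linarith

lemma tele_sum {L : ℝ} (D W : ℕ → ℝ)
    (hstep : ∀ j, 2 * L * D (j + 1) + W (j + 1) ≤ 2 * L * D j) :
    ∀ i, 2 * L * D i + ∑ j ∈ range i, W (j + 1) ≤ 2 * L * D 0 := by
  intro i
  induction i with
  | zero => simp
  | succ i ih =>
    rw [sum_range_succ]
    linarith [hstep i, ih]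

end Conj

set_option maxHeartbeats 1000000 in
open Finset in
/-- gradient descent with step size `1/L` (so `a_k = k/L`), and
`q_k := −(x_k − x₀)/a_k = −(L/k)(x_k − x₀)`.  Then (a) `q_k ∈ dom f*` for `k ≥ 1`;
(b) if `p⋆ ∈ dom f*` then `‖q_k − p⋆‖² ≤ 8 L D / k` and (for `D > 0`)
`‖q_k‖² − ‖p⋆‖² ≤ 2 L D (C₀ + log k)/k`. -/
theorem stmt4 {n : ℕ} (hn : 1 ≤ n) (L : ℝ) (hL : 0 < L)
    (f : EuclideanSpace ℝ (Fin n) → ℝ) (hf : LSmoothConvex L f)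
    (x₀ : EuclideanSpace ℝ (Fin n))
    (x : ℕ → EuclideanSpace ℝ (Fin n)) (hx0 : x 0 = x₀)
    (hstep : ∀ k, x (k + 1) = x k - (1 / L) • gradient f (x k))
    (pstar : EuclideanSpace ℝ (Fin n))
    (hps : pstar ∈ closure (fconjDom f))
    (hmin : ∀ q ∈ closure (fconjDom f), ‖pstar‖ ≤ ‖q‖) :
    (∀ k : ℕ, 1 ≤ k → -((L / (k : ℝ)) • (x k - x₀)) ∈ fconjDom f) ∧
    (pstar ∈ fconjDom f →
      ∀ k : ℕ, 1 ≤ k →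
        ‖-((L / (k : ℝ)) • (x k - x₀)) - pstar‖ ^ 2 ≤
          8 * L * dualDiv f x₀ pstar / k ∧
        (0 < dualDiv f x₀ pstar →
          ‖-((L / (k : ℝ)) • (x k - x₀))‖ ^ 2 - ‖pstar‖ ^ 2 ≤
            2 * L * dualDiv f x₀ pstar *
              ((1 + (‖gradient f x₀‖ ^ 2 - ‖pstar‖ ^ 2) /
                  (2 * L * dualDiv f x₀ pstar)) + Real.log k) / k)) := by
  obtain ⟨hc, hdiff, hlip⟩ := hf
  have hLne : L ≠ 0 := ne_of_gt hL
  have h2L : (0:ℝ) < 2 * L := by positivity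
  set g : ℕ → EuclideanSpace ℝ (Fin n) := fun j => gradient f (x j) with hg
  have hgdom : ∀ j, g j ∈ fconjDom f := fun j => grad_mem_fconjDom hc hdiff (x j)
  -- sum formula for the iterates
  have hS : ∀ k : ℕ, x k = x₀ - L⁻¹ • ∑ j ∈ range k, g j := by
    intro k
    induction k with
    | zero => simp [hx0]
    | succ k ih =>
      have h1 : x (k + 1) = x k - (1 / L) • g k := hstep k
      rw [h1, ih, sum_range_succ]
      module
  have hqk : ∀ k : ℕ, 1 ≤ k →
      -((L / (k : ℝ)) • (x k - x₀)) = (k : ℝ)⁻¹ • ∑ j ∈ range k, g j := by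
    intro k hk
    have hkne : ((k : ℝ)) ≠ 0 := Nat.cast_ne_zero.mpr (by omega)
    rw [hS k]
    have h0 : x₀ - L⁻¹ • ∑ j ∈ range k, g j - x₀ = -(L⁻¹ • ∑ j ∈ range k, g j) := by abel
    rw [h0, smul_neg, neg_neg, smul_smul]
    congr 1
    field_simp
  -- Part (a)
  have parta : ∀ k : ℕ, 1 ≤ k → -((L / (k : ℝ)) • (x k - x₀)) ∈ fconjDom f := by
    intro k hk
    have hkne : ((k : ℝ)) ≠ 0 := Nat.cast_ne_zero.mpr (by omega)
    have hkinv : (0:ℝ) ≤ (k : ℝ)⁻¹ := by positivity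
    rw [hqk k hk]
    apply mem_fconjDom_of_le (c := (k : ℝ)⁻¹ * ∑ j ∈ range k, (⟪g j, x j⟫_ℝ - f (x j)))
    intro y
    have hterm : ∀ j, ⟪g j, y⟫_ℝ - f y ≤ ⟪g j, x j⟫_ℝ - f (x j) := by
      intro j
      have h : f (x j) + ⟪g j, y - x j⟫_ℝ ≤ f y := convex_grad_le f hc hdiff (x j) y
      rw [inner_sub_right] at h
      linarith
    have hinner : ⟪(k : ℝ)⁻¹ • ∑ j ∈ range k, g j, y⟫_ℝ
        = (k : ℝ)⁻¹ * ∑ j ∈ range k, ⟪g j, y⟫_ℝ := by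
      rw [real_inner_smul_left, sum_inner]
    rw [hinner]
    have hsum : ∑ j ∈ range k, ⟪g j, y⟫_ℝ - (k:ℝ) * f y
        ≤ ∑ j ∈ range k, (⟪g j, x j⟫_ℝ - f (x j)) := by
      have h := Finset.sum_le_sum (fun j (_ : j ∈ range k) => hterm j)
      rw [Finset.sum_sub_distrib, Finset.sum_const, card_range, nsmul_eq_mul] at h
      linarith
    have h2 := mul_le_mul_of_nonneg_left hsum hkinv
    have hid : (k:ℝ)⁻¹ * (∑ j ∈ range k, ⟪g j, y⟫_ℝ - (k:ℝ) * f y)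
        = (k:ℝ)⁻¹ * ∑ j ∈ range k, ⟪g j, y⟫_ℝ - f y := by
      field_simp
    rw [hid] at h2
    exact h2
  refine ⟨parta, ?_⟩
  -- Part (b)
  intro hpd k hk
  have hkne : ((k : ℝ)) ≠ 0 := Nat.cast_ne_zero.mpr (by omega)
  have hkpos : (0:ℝ) < (k : ℝ) := by
    have h1 : (1:ℝ) ≤ (k:ℝ) := by exact_mod_cast hk
    linarith
  set r : ℝ := (fconj f pstar).toReal with hr
  set D : ℕ → ℝ := fun j => f (x j) + r - ⟪pstar, x j⟫_ℝ with hD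
  have hDd : ∀ i, 2 * L * D i
      = 2 * L * f (x i) + 2 * L * r - 2 * L * ⟪pstar, x i⟫_ℝ := by
    intro i; simp only [hD]; ring
  have hD0 : dualDiv f x₀ pstar = D 0 := by
    simp only [hD, dualDiv, hx0, hr]
  have hDnn : ∀ j, 0 ≤ D j := by
    intro j
    have h1 : ⟪pstar, x j⟫_ℝ - f (x j) ≤ r := fenchel_young hpd (x j)
    simp only [hD]
    linarith
  have hxd : ∀ j, x j - x (j + 1) = (1 / L) • g j := by
    intro j; rw [hstep j]; abel
  -- step recursion
  have hstepD : ∀ j, 2 * L * D (j + 1) + (‖g (j + 1)‖ ^ 2 - ‖pstar‖ ^ 2) ≤ 2 * L * D j := by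
    intro j
    have h5 : f (x (j+1)) + ⟪g (j+1), x j - x (j+1)⟫_ℝ
        + 1 / (2 * L) * ‖g j - g (j+1)‖ ^ 2 ≤ f (x j) :=
      bregman_lb f hL hc hdiff hlip (x j) (x (j+1))
    rw [hxd j, real_inner_smul_right] at h5
    -- scaled version of h5
    have h5m : 2 * L * f (x (j+1)) + 2 * ⟪g (j+1), g j⟫_ℝ + ‖g j - g (j+1)‖ ^ 2
        ≤ 2 * L * f (x j) := by
      have h := mul_le_mul_of_nonneg_left h5 h2L.le
      have e1 : 2 * L * (f (x (j+1)) + 1 / L * ⟪g (j+1), g j⟫_ℝ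
          + 1 / (2 * L) * ‖g j - g (j+1)‖ ^ 2)
          = 2 * L * f (x (j+1)) + 2 * ⟪g (j+1), g j⟫_ℝ + ‖g j - g (j+1)‖ ^ 2 := by
        field_simp
      linarith [h, e1.symm.le, e1.le]
    -- inner product manipulation
    have hip : ⟪pstar, x (j+1)⟫_ℝ = ⟪pstar, x j⟫_ℝ - 1 / L * ⟪pstar, g j⟫_ℝ := by
      rw [hstep j, inner_sub_right, real_inner_smul_right]
    have hip2 : 2 * L * (⟪pstar, x j⟫_ℝ - 1 / L * ⟪pstar, g j⟫_ℝ)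
        = 2 * L * ⟪pstar, x j⟫_ℝ - 2 * ⟪pstar, g j⟫_ℝ := by
      field_simp
    -- the key geometric inequality
    have eN1 : ‖g j - g (j+1)‖ ^ 2
        = ‖g j‖ ^ 2 - 2 * ⟪g j, g (j+1)⟫_ℝ + ‖g (j+1)‖ ^ 2 := norm_sub_sq_real _ _
    have eNp : ‖g j - pstar‖ ^ 2
        = ‖g j‖ ^ 2 - 2 * ⟪g j, pstar⟫_ℝ + ‖pstar‖ ^ 2 := norm_sub_sq_real _ _
    have ecomm : ⟪g (j+1), g j⟫_ℝ = ⟪g j, g (j+1)⟫_ℝ := real_inner_comm _ _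
    have ecomm2 : ⟪pstar, g j⟫_ℝ = ⟪g j, pstar⟫_ℝ := real_inner_comm _ _
    have hNp2 : 0 ≤ ‖g j‖ ^ 2 - 2 * ⟪g j, pstar⟫_ℝ + ‖pstar‖ ^ 2 := by
      rw [← eNp]; positivity
    have key2 : 2 * ⟪pstar, g j⟫_ℝ + (‖g (j+1)‖ ^ 2 - ‖pstar‖ ^ 2)
        ≤ 2 * ⟪g (j+1), g j⟫_ℝ + ‖g j - g (j+1)‖ ^ 2 := by
      rw [eN1, ecomm, ecomm2]
      linarith [hNp2]
    rw [hDd (j+1), hDd j, hip, hip2]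
    linarith [h5m, key2]
  have htel := tele_sum D (fun l => ‖g l‖ ^ 2 - ‖pstar‖ ^ 2) hstepD
  -- monotone gradient norms
  have hmono : ∀ j, ‖g (j + 1)‖ ≤ ‖g j‖ := by
    intro j
    have b1 : f (x (j+1)) + ⟪g (j+1), x j - x (j+1)⟫_ℝ
        + 1 / (2 * L) * ‖g j - g (j+1)‖ ^ 2 ≤ f (x j) :=
      bregman_lb f hL hc hdiff hlip (x j) (x (j+1))
    have b2 : f (x j) + ⟪g j, x (j+1) - x j⟫_ℝ
        + 1 / (2 * L) * ‖g (j+1) - g j‖ ^ 2 ≤ f (x (j+1)) :=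
      bregman_lb f hL hc hdiff hlip (x (j+1)) (x j)
    rw [hxd j, real_inner_smul_right] at b1
    have hxd2 : x (j+1) - x j = -((1 / L) • g j) := by rw [hstep j]; abel
    rw [hxd2, inner_neg_right, real_inner_smul_right, norm_sub_rev] at b2
    have h6 : 1 / L * ⟪g (j+1), g j⟫_ℝ - 1 / L * ⟪g j, g j⟫_ℝ
        + 2 * (1 / (2 * L)) * ‖g j - g (j+1)‖ ^ 2 ≤ 0 := by linarith [b1, b2]
    have h7 := mul_le_mul_of_nonneg_left h6 hL.le
    have hE : L * (1 / L * ⟪g (j+1), g j⟫_ℝ - 1 / L * ⟪g j, g j⟫_ℝ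
        + 2 * (1 / (2 * L)) * ‖g j - g (j+1)‖ ^ 2)
        = ⟪g (j+1), g j⟫_ℝ - ⟪g j, g j⟫_ℝ + ‖g j - g (j+1)‖ ^ 2 := by
      field_simp
    rw [hE, mul_zero] at h7
    have eN1 : ‖g j - g (j+1)‖ ^ 2
        = ‖g j‖ ^ 2 - 2 * ⟪g j, g (j+1)⟫_ℝ + ‖g (j+1)‖ ^ 2 := norm_sub_sq_real _ _
    have ecomm : ⟪g (j+1), g j⟫_ℝ = ⟪g j, g (j+1)⟫_ℝ := real_inner_comm _ _
    have eself : ⟪g j, g j⟫_ℝ = ‖g j‖ ^ 2 := real_inner_self_eq_norm_sq _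
    have key : ‖g (j+1)‖ ^ 2 ≤ ⟪g j, g (j+1)⟫_ℝ := by
      rw [eN1, ecomm, eself] at h7
      linarith
    by_cases h0 : ‖g (j+1)‖ = 0
    · rw [h0]; exact norm_nonneg _
    · have hpos : 0 < ‖g (j+1)‖ := lt_of_le_of_ne (norm_nonneg _) (Ne.symm h0)
      have hcs := real_inner_le_norm (g j) (g (j+1))
      nlinarith [key, hcs, hpos]
  have hanti : Antitone fun j => ‖g j‖ := antitone_nat_of_succ_le hmono
  -- per-index bound
  have hWb : ∀ j : ℕ, ((j:ℝ) + 1) * (‖g (j + 1)‖ ^ 2 - ‖pstar‖ ^ 2) ≤ 2 * L * D 0 := by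
    intro j
    have h1 := htel (j + 1)
    have h2 : ∀ l ∈ range (j + 1),
        ‖g (j + 1)‖ ^ 2 - ‖pstar‖ ^ 2 ≤ ‖g (l + 1)‖ ^ 2 - ‖pstar‖ ^ 2 := by
      intro l hl
      rw [mem_range] at hl
      have hle : ‖g (j + 1)‖ ≤ ‖g (l + 1)‖ := hanti (by omega)
      have h3 := pow_le_pow_left₀ (norm_nonneg _) hle 2
      linarith
    have h3 := Finset.card_nsmul_le_sum (range (j + 1)) _ _ h2
    rw [card_range, nsmul_eq_mul] at h3
    have hc3 : ((j + 1 : ℕ) : ℝ) = (j:ℝ) + 1 := by push_cast; ring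
    rw [hc3] at h3
    have h4 := hDnn (j + 1)
    nlinarith [h1, h3, h4, hL]
  -- variational inequality
  have hvi : ∀ j, ‖pstar‖ ^ 2 ≤ ⟪g j, pstar⟫_ℝ := fun j =>
    var_ineq hps hmin (subset_closure (hgdom j))
  have hsub : ∀ j, ‖g j - pstar‖ ^ 2 ≤ ‖g j‖ ^ 2 - ‖pstar‖ ^ 2 := by
    intro j
    rw [norm_sub_sq_real]
    linarith [hvi j]
  -- D 0 bounds ‖g 0 - pstar‖²
  have hD0' : ‖g 0 - pstar‖ ^ 2 ≤ 2 * L * D 0 := by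
    have h : ⟪pstar, x 0⟫_ℝ - f (x 0) + 1 / (2 * L) * ‖g 0 - pstar‖ ^ 2 ≤ r :=
      fenchel_young_strong hL hdiff hlip hpd (x 0)
    have hscaled := mul_le_mul_of_nonneg_left h h2L.le
    have hE : 2 * L * (⟪pstar, x 0⟫_ℝ - f (x 0) + 1 / (2 * L) * ‖g 0 - pstar‖ ^ 2)
        = 2 * L * ⟪pstar, x 0⟫_ℝ - 2 * L * f (x 0) + ‖g 0 - pstar‖ ^ 2 := by
      field_simp
    rw [hE] at hscaled
    rw [hDd 0] at *
    linarith [hscaled, hDd 0]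
  set A := 2 * L * D 0 with hA
  have hAnn : 0 ≤ A := by
    rw [hA]
    nlinarith [hDnn 0, hL]
  clear_value A D r
  constructor
  -- Part (b)(i)
  · have hterm0 : ‖g 0 - pstar‖ ≤ Real.sqrt A := by
      calc ‖g 0 - pstar‖ = Real.sqrt (‖g 0 - pstar‖ ^ 2) := (Real.sqrt_sq (norm_nonneg _)).symm
        _ ≤ Real.sqrt A := Real.sqrt_le_sqrt hD0'
    have htermj : ∀ j : ℕ, ‖g (j + 1) - pstar‖ ≤ Real.sqrt A * (1 / Real.sqrt ((j:ℝ) + 1)) := by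
      intro j
      have hj : (0:ℝ) < (j:ℝ) + 1 := by positivity
      have h1 : ‖g (j + 1) - pstar‖ ^ 2 ≤ A / ((j:ℝ) + 1) := by
        rw [le_div_iff₀ hj]
        nlinarith [hsub (j + 1), hWb j, hj.le]
      calc ‖g (j + 1) - pstar‖ = Real.sqrt (‖g (j + 1) - pstar‖ ^ 2) :=
            (Real.sqrt_sq (norm_nonneg _)).symm
        _ ≤ Real.sqrt (A / ((j:ℝ) + 1)) := Real.sqrt_le_sqrt h1
        _ = Real.sqrt A * (1 / Real.sqrt ((j:ℝ) + 1)) := by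
            rw [Real.sqrt_div hAnn, div_eq_mul_one_div]
    have hsumT : ∑ j ∈ range k, ‖g j - pstar‖ ≤ 2 * Real.sqrt A * Real.sqrt (k:ℝ) := by
      obtain ⟨m, rfl⟩ : ∃ m, k = m + 1 := ⟨k - 1, by omega⟩
      rw [sum_range_succ']
      have hstep2 : ∑ j ∈ range m, ‖g (j + 1) - pstar‖
          ≤ Real.sqrt A * ∑ j ∈ range m, (1 / Real.sqrt ((j:ℝ) + 1)) := by
        rw [mul_sum]
        exact Finset.sum_le_sum fun j _ => htermj j
      have hH := sqrt_harm' (m + 1) (by omega)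
      have hm1 : m + 1 - 1 = m := by omega
      rw [hm1] at hH
      have hsq : 0 ≤ Real.sqrt A := Real.sqrt_nonneg _
      have hmul := mul_le_mul_of_nonneg_left hH hsq
      calc (∑ j ∈ range m, ‖g (j + 1) - pstar‖) + ‖g 0 - pstar‖
          ≤ Real.sqrt A * ∑ j ∈ range m, (1 / Real.sqrt ((j:ℝ) + 1)) + Real.sqrt A :=
            add_le_add hstep2 hterm0
        _ = Real.sqrt A * (1 + ∑ j ∈ range m, (1 / Real.sqrt ((j:ℝ) + 1))) := by ring
        _ ≤ Real.sqrt A * (2 * Real.sqrt ((m + 1 : ℕ) : ℝ)) := hmul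
        _ = 2 * Real.sqrt A * Real.sqrt ((m + 1 : ℕ) : ℝ) := by ring
    have hqnorm : (k:ℝ) * ‖-((L / (k : ℝ)) • (x k - x₀)) - pstar‖
        ≤ ∑ j ∈ range k, ‖g j - pstar‖ := by
      rw [hqk k hk]
      have he : ∑ j ∈ range k, (g j - pstar)
          = (k:ℝ) • ((k : ℝ)⁻¹ • ∑ j ∈ range k, g j - pstar) := by
        rw [Finset.sum_sub_distrib, Finset.sum_const, card_range, smul_sub, smul_smul,
          mul_inv_cancel₀ hkne, one_smul, ← Nat.cast_smul_eq_nsmul ℝ]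
      have h1 : ‖∑ j ∈ range k, (g j - pstar)‖ ≤ ∑ j ∈ range k, ‖g j - pstar‖ :=
        norm_sum_le _ _
      rw [he, norm_smul, Real.norm_eq_abs, abs_of_pos hkpos] at h1
      exact h1
    have hfin : (k:ℝ) * ‖-((L / (k : ℝ)) • (x k - x₀)) - pstar‖
        ≤ 2 * Real.sqrt A * Real.sqrt (k:ℝ) := le_trans hqnorm hsumT
    have hsqA : (Real.sqrt A) ^ 2 = A := Real.sq_sqrt hAnn
    have hsqk : (Real.sqrt (k:ℝ)) ^ 2 = (k:ℝ) := Real.sq_sqrt hkpos.le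
    have hnn : 0 ≤ ‖-((L / (k : ℝ)) • (x k - x₀)) - pstar‖ := norm_nonneg _
    have hsq2 : ((k:ℝ) * ‖-((L / (k : ℝ)) • (x k - x₀)) - pstar‖) ^ 2
        ≤ (2 * Real.sqrt A * Real.sqrt (k:ℝ)) ^ 2 := by
      apply pow_le_pow_left₀ (by positivity) hfin
    have h9 : ‖-((L / (k : ℝ)) • (x k - x₀)) - pstar‖ ^ 2 * (k:ℝ) ≤ 4 * A := by
      nlinarith [hsq2, hsqA, hsqk, hkpos, hnn]
    have hA4 : 4 * A = 8 * L * D 0 := by rw [hA]; ring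
    rw [hD0, le_div_iff₀ hkpos]
    exact h9.trans_eq hA4
  -- Part (b)(ii)
  · intro hDpos
    rw [hD0] at hDpos
    have hgx0 : gradient f x₀ = g 0 := by rw [hg]; simp [hx0]
    have hlog : 0 ≤ Real.log k := Real.log_nonneg (by exact_mod_cast hk)
    have hJ : (k:ℝ) * ‖-((L / (k : ℝ)) • (x k - x₀))‖ ^ 2 ≤ ∑ j ∈ range k, ‖g j‖ ^ 2 := by
      rw [hqk k hk]
      have h1 : ‖∑ j ∈ range k, g j‖ ≤ ∑ j ∈ range k, ‖g j‖ := norm_sum_le _ _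
      have h2 : (∑ j ∈ range k, ‖g j‖) ^ 2 ≤ (k:ℝ) * ∑ j ∈ range k, ‖g j‖ ^ 2 := by
        have h := sq_sum_le_card_mul_sum_sq (s := range k) (f := fun j => ‖g j‖)
        simpa [card_range] using h
      have h3 : ‖(k : ℝ)⁻¹ • ∑ j ∈ range k, g j‖ = (k:ℝ)⁻¹ * ‖∑ j ∈ range k, g j‖ := by
        rw [norm_smul, Real.norm_eq_abs, abs_of_pos (by positivity)]
      rw [h3]
      have h4 : ‖∑ j ∈ range k, g j‖ ^ 2 ≤ (k:ℝ) * ∑ j ∈ range k, ‖g j‖ ^ 2 := by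
        nlinarith [h1, h2, norm_nonneg (∑ j ∈ range k, g j),
          Finset.sum_nonneg (fun j (_ : j ∈ range k) => norm_nonneg (g j))]
      have hexp : (k:ℝ) * ((k:ℝ)⁻¹ * ‖∑ j ∈ range k, g j‖) ^ 2
          = (k:ℝ)⁻¹ * ‖∑ j ∈ range k, g j‖ ^ 2 := by
        field_simp
      rw [hexp]
      calc (k:ℝ)⁻¹ * ‖∑ j ∈ range k, g j‖ ^ 2
          ≤ (k:ℝ)⁻¹ * ((k:ℝ) * ∑ j ∈ range k, ‖g j‖ ^ 2) :=
            mul_le_mul_of_nonneg_left h4 (by positivity)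
        _ = ∑ j ∈ range k, ‖g j‖ ^ 2 := by field_simp
    have hsplit : ∑ j ∈ range k, (‖g j‖ ^ 2 - ‖pstar‖ ^ 2)
        ≤ (‖g 0‖ ^ 2 - ‖pstar‖ ^ 2) + 2 * L * D 0 := by
      obtain ⟨m, rfl⟩ : ∃ m, k = m + 1 := ⟨k - 1, by omega⟩
      rw [sum_range_succ']
      have h1 := htel m
      have h2 := hDnn m
      have h3 : ∑ j ∈ range m, (‖g (j + 1)‖ ^ 2 - ‖pstar‖ ^ 2) ≤ 2 * L * D 0 := by
        nlinarith [h1, h2, hL]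
      linarith
    have hsum2 : ∑ j ∈ range k, (‖g j‖ ^ 2 - ‖pstar‖ ^ 2)
        = (∑ j ∈ range k, ‖g j‖ ^ 2) - (k:ℝ) * ‖pstar‖ ^ 2 := by
      rw [Finset.sum_sub_distrib, Finset.sum_const, card_range, nsmul_eq_mul]
    have hmain : (k:ℝ) * (‖-((L / (k : ℝ)) • (x k - x₀))‖ ^ 2 - ‖pstar‖ ^ 2)
        ≤ (‖g 0‖ ^ 2 - ‖pstar‖ ^ 2) + 2 * L * D 0 := by
      rw [mul_sub]
      rw [hsum2] at hsplit
      nlinarith [hJ, hsplit]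
    rw [hgx0, hD0]
    have hpos2 : (0:ℝ) < 2 * L * D 0 := by nlinarith [hDpos, hL]
    have hCid : 2 * L * D 0 * (1 + (‖g 0‖ ^ 2 - ‖pstar‖ ^ 2) / (2 * L * D 0))
        = 2 * L * D 0 + (‖g 0‖ ^ 2 - ‖pstar‖ ^ 2) := by
      field_simp
    have hRHS : 2 * L * D 0 * ((1 + (‖g 0‖ ^ 2 - ‖pstar‖ ^ 2) / (2 * L * D 0)) + Real.log k)
        = (2 * L * D 0 + (‖g 0‖ ^ 2 - ‖pstar‖ ^ 2)) + 2 * L * D 0 * Real.log k := by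
      rw [mul_add, hCid]
    rw [hRHS, le_div_iff₀ hkpos]
    have hlogterm : 0 ≤ 2 * L * D 0 * Real.log k := mul_nonneg hpos2.le hlog
    linarith [hmain, hlogterm]
end

section
/- Let Ψ* : ℝ^n → ℝ be L_{Ψ*}-smooth convex with biconjugate Ψ := (Ψ*)*, let F : ℝ^n → ℝ be L_F-smooth convex, let R ≥ 2 and Z₀ ∈ ℝ^n, and let (X, Z) be a solution of the AMD ODE with parameter R and initial data Z₀. Suppose x⋆ ∈ dom Ψ satisfies F(x⋆) ≤ F(x) for all x ∈ dom Ψ. Then for all t > 0, F(X(t)) − F(x⋆) ≤ R²·D_{Ψ*}(Z₀, x⋆)/t². -/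
open scoped InnerProductSpace
open Filter Topology

variable {n : ℕ}

lemma fderiv_eq_inner_gradient (f : EuclideanSpace ℝ (Fin n) → ℝ)
    (hf : Differentiable ℝ f) (x w : EuclideanSpace ℝ (Fin n)) :
    fderiv ℝ f x w = ⟪gradient f x, w⟫_ℝ := by
  have : (InnerProductSpace.toDual ℝ _) (gradient f x) = fderiv ℝ f x := by
    rw [gradient]; exact (InnerProductSpace.toDual ℝ _).apply_symm_apply _
  rw [← this]; simp [InnerProductSpace.toDual_apply_apply]

lemma convex_grad_ineq (f : EuclideanSpace ℝ (Fin n) → ℝ)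
    (hc : ConvexOn ℝ Set.univ f) (hf : Differentiable ℝ f)
    (x y : EuclideanSpace ℝ (Fin n)) :
    f x + ⟪gradient f x, y - x⟫_ℝ ≤ f y := by
  set c : ℝ → EuclideanSpace ℝ (Fin n) := fun r => x + r • (y - x) with hc'
  have hcd : ∀ r, HasDerivAt c (y - x) r := by
    intro r
    have : HasDerivAt (fun r : ℝ => r • (y - x)) ((1 : ℝ) • (y - x)) r := by
      simpa using (hasDerivAt_id r).smul_const (y - x)
    simpa [hc'] using this.const_add x
  set q : ℝ → ℝ := fun r => f (c r) with hq'
  have hqd : ∀ r, HasDerivAt q (⟪gradient f (c r), y - x⟫_ℝ) r := by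
    intro r
    have h1 := ((hf (c r)).hasFDerivAt).comp_hasDerivAt r (hcd r)
    rw [fderiv_eq_inner_gradient f hf] at h1
    exact h1
  have hqc : ConvexOn ℝ Set.univ q := by
    have := hc.comp_affineMap (AffineMap.lineMap x y : ℝ →ᵃ[ℝ] _)
    have he : q = f ∘ ⇑(AffineMap.lineMap x y) := by
      funext r
      simp only [hq', hc', Function.comp_apply, AffineMap.lineMap_apply,
        vsub_eq_sub, vadd_eq_add]
      congr 1
      module
    rw [he]
    simpa using this
  have h0 : (⟪gradient f (c 0), y - x⟫_ℝ) ≤ slope q 0 1 :=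
    hqc.le_slope_of_hasDerivAt (Set.mem_univ 0) (Set.mem_univ 1) one_pos (hqd 0)
  have hs : slope q 0 1 = q 1 - q 0 := by simp [slope_def_field]
  have hq0 : q 0 = f x := by simp [hq', hc']
  have hq1 : q 1 = f y := by simp [hq', hc']
  have hc0 : c 0 = x := by simp [hc']
  rw [hs, hq0, hq1, hc0] at h0
  linarith

lemma barrier_le {g : ℝ → ℝ} {t₀ : ℝ} (ht₀ : 0 ≤ t₀)
    (gc : ContinuousOn g (Set.Icc 0 t₀)) (g0 : g 0 ≤ 0)
    (hder : ∀ s ∈ Set.Ioo 0 t₀, 0 < g s → ∃ d, HasDerivAt g d s ∧ d ≤ 0) :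
    g t₀ ≤ 0 := by
  rcases eq_or_lt_of_le ht₀ with h | h
  · rwa [← h]
  by_contra hgt
  push_neg at hgt
  set S : Set ℝ := Set.Icc 0 t₀ ∩ g ⁻¹' Set.Iic 0 with hS
  have hclosed : IsClosed S := gc.preimage_isClosed_of_isClosed isClosed_Icc isClosed_Iic
  have h0S : (0 : ℝ) ∈ S := ⟨⟨le_refl 0, ht₀⟩, g0⟩
  have hbdd : BddAbove S := (bddAbove_Icc (a := (0:ℝ)) (b := t₀)).mono Set.inter_subset_left
  set s₁ := sSup S with hs₁def
  have hs₁S : s₁ ∈ S := hclosed.csSup_mem ⟨0, h0S⟩ hbdd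
  have hs₁t₀ : s₁ < t₀ := by
    rcases lt_or_eq_of_le hs₁S.1.2 with h' | h'
    · exact h'
    · exact absurd (h' ▸ hs₁S.2) (by simpa using hgt)
  have hpos : ∀ s ∈ Set.Ioc s₁ t₀, 0 < g s := by
    intro s hs
    by_contra hle
    push_neg at hle
    have hsS : s ∈ S := ⟨⟨le_trans hs₁S.1.1 hs.1.le, hs.2⟩, hle⟩
    exact absurd (le_csSup hbdd hsS) (not_le.mpr hs.1)
  have hanti : AntitoneOn g (Set.Icc s₁ t₀) := by
    apply antitoneOn_of_deriv_nonpos (convex_Icc s₁ t₀)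
      (gc.mono (Set.Icc_subset_Icc hs₁S.1.1 le_rfl))
    · intro s hs
      rw [interior_Icc] at hs
      obtain ⟨d, hd, _⟩ := hder s ⟨lt_of_le_of_lt hs₁S.1.1 hs.1, hs.2⟩
        (hpos s ⟨hs.1, hs.2.le⟩)
      exact hd.differentiableAt.differentiableWithinAt
    · intro s hs
      rw [interior_Icc] at hs
      obtain ⟨d, hd, hd0⟩ := hder s ⟨lt_of_le_of_lt hs₁S.1.1 hs.1, hs.2⟩
        (hpos s ⟨hs.1, hs.2.le⟩)
      rw [hd.deriv]; exact hd0
  have := hanti (Set.left_mem_Icc.mpr hs₁t₀.le)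
    (Set.right_mem_Icc.mpr hs₁t₀.le) hs₁t₀.le
  exact absurd (le_trans this hs₁S.2) (not_le.mpr hgt)

/-- for a solution `(X, Z)` of the AMD ODE with parameter `R ≥ 2` and a
minimizer `x⋆` of `F` over `dom Ψ` (where `Ψ = (Ψ*)* = fconj Ψstar`),
`F(X(t)) − F(x⋆) ≤ R² D_{Ψ*}(Z₀, x⋆)/t²` for all `t > 0`. -/
theorem stmt9 {n : ℕ} (hn : 1 ≤ n) (LΨ LF : ℝ) (hLΨ : 0 < LΨ) (hLF : 0 < LF)
    (Ψstar F : EuclideanSpace ℝ (Fin n) → ℝ)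
    (hΨ : LSmoothConvex LΨ Ψstar) (hF : LSmoothConvex LF F)
    (R : ℝ) (hR : 2 ≤ R) (Z₀ : EuclideanSpace ℝ (Fin n))
    (X Z X' Z' : ℝ → EuclideanSpace ℝ (Fin n))
    (hX : ∀ t ∈ Set.Ici (0 : ℝ), HasDerivWithinAt X (X' t) (Set.Ici 0) t)
    (hX' : ContinuousOn X' (Set.Ici 0))
    (hZ : ∀ t ∈ Set.Ici (0 : ℝ), HasDerivWithinAt Z (Z' t) (Set.Ici 0) t)
    (hZ' : ContinuousOn Z' (Set.Ici 0))
    (hZ0 : Z 0 = Z₀) (hX0 : X 0 = gradient Ψstar Z₀)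
    (hode1 : ∀ t > (0 : ℝ), X' t = (R / t) • (gradient Ψstar (Z t) - X t))
    (hode2 : ∀ t > (0 : ℝ), Z' t = -((t / R) • gradient F (X t)))
    (xstar : EuclideanSpace ℝ (Fin n)) (hxs : xstar ∈ fconjDom Ψstar)
    (hxsmin : ∀ x ∈ fconjDom Ψstar, F xstar ≤ F x) :
    ∀ t > (0 : ℝ), F (X t) - F xstar ≤ R ^ 2 * dualDiv Ψstar Z₀ xstar / t ^ 2 := by
  have hR0 : (0:ℝ) < R := lt_of_lt_of_le two_pos hR
  set c := (fconj Ψstar xstar).toReal with hc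
  -- Fenchel–Young inequality for xstar
  have hlez : ∀ z, ((⟪xstar, z⟫_ℝ - Ψstar z : ℝ) : EReal) ≤ fconj Ψstar xstar :=
    fun z => le_iSup (fun x => ((⟪xstar, x⟫_ℝ - Ψstar x : ℝ) : EReal)) z
  have hne : fconj Ψstar xstar ≠ ⊤ := hxs.ne
  have hnb : fconj Ψstar xstar ≠ ⊥ := by
    intro h
    have := hlez 0
    rw [h, le_bot_iff] at this
    exact (EReal.coe_ne_bot _) this
  have hfy : ∀ z, ⟪xstar, z⟫_ℝ - Ψstar z ≤ c := by
    intro z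
    have h1 := hlez z
    rw [← EReal.coe_toReal hne hnb, EReal.coe_le_coe_iff] at h1
    exact h1
  -- gradient inequalities
  have hFgrad : ∀ x y, F x + ⟪gradient F x, y - x⟫_ℝ ≤ F y :=
    convex_grad_ineq F hF.1 hF.2.1
  have hΨgrad : ∀ x y, Ψstar x + ⟪gradient Ψstar x, y - x⟫_ℝ ≤ Ψstar y :=
    convex_grad_ineq Ψstar hΨ.1 hΨ.2.1
  have hψ : ∀ z x, ⟪gradient Ψstar z, x⟫_ℝ - Ψstar x
      ≤ ⟪gradient Ψstar z, z⟫_ℝ - Ψstar z := by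
    intro z x
    have h1 := hΨgrad z x
    rw [inner_sub_right] at h1
    linarith
  -- continuity facts
  have hXc : ContinuousOn X (Set.Ici 0) := fun t ht => (hX t ht).continuousWithinAt
  have hZc : ContinuousOn Z (Set.Ici 0) := fun t ht => (hZ t ht).continuousWithinAt
  have hVc : Continuous fun z => gradient Ψstar z := hΨ.2.2.continuous
  have hΨcont : Continuous Ψstar := hΨ.2.1.continuous
  -- X stays in the domain of Ψ = (Ψ*)*
  have hdom : ∀ t₀ ∈ Set.Ici (0:ℝ), X t₀ ∈ fconjDom Ψstar := by
    intro t₀ ht₀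
    set ψ : ℝ → ℝ := fun s => ⟪gradient Ψstar (Z s), Z s⟫_ℝ - Ψstar (Z s) with hψdef
    have hZicc : ContinuousOn Z (Set.Icc 0 t₀) := hZc.mono Set.Icc_subset_Ici_self
    have hψc : ContinuousOn ψ (Set.Icc 0 t₀) :=
      ((hVc.comp_continuousOn hZicc).inner hZicc).sub (hΨcont.comp_continuousOn hZicc)
    have hbdd : BddAbove (ψ '' Set.Icc 0 t₀) :=
      ((isCompact_Icc).image_of_continuousOn hψc).bddAbove
    set M := sSup (ψ '' Set.Icc 0 t₀) with hM
    have hMle : ∀ s ∈ Set.Icc (0:ℝ) t₀, ψ s ≤ M := fun s hs => le_csSup hbdd ⟨s, hs, rfl⟩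
    have key : ∀ x, ⟪X t₀, x⟫_ℝ - Ψstar x ≤ M := by
      intro x
      have hkey : (fun s => ⟪x, X s⟫_ℝ - Ψstar x - M) t₀ ≤ 0 := by
        apply barrier_le ht₀
        · exact ((ContinuousOn.inner continuousOn_const
            (hXc.mono Set.Icc_subset_Ici_self)).sub continuousOn_const).sub
            continuousOn_const
        · have h0 := hψ Z₀ x
          have hψ0 : ψ 0 ≤ M := hMle 0 ⟨le_rfl, ht₀⟩
          simp only [hψdef, hZ0] at hψ0
          have hcm0 : ⟪x, gradient Ψstar Z₀⟫_ℝ = ⟪gradient Ψstar Z₀, x⟫_ℝ :=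
            real_inner_comm _ _
          simp only [hX0]
          linarith [hcm0]
        · intro s hs hgs
          have hXs : HasDerivAt X (X' s) s :=
            (hX s (le_of_lt hs.1)).hasDerivAt (Ici_mem_nhds hs.1)
          have hd : HasDerivAt (fun s => ⟪x, X s⟫_ℝ) (⟪x, X' s⟫_ℝ) s := by
            have := (innerSL ℝ x).hasFDerivAt.comp_hasDerivAt s hXs
            exact this
          refine ⟨⟪x, X' s⟫_ℝ, (hd.sub_const _).sub_const _, ?_⟩
          rw [hode1 s hs.1, inner_smul_right, inner_sub_right]
          have hψs : ⟪gradient Ψstar (Z s), x⟫_ℝ - Ψstar x ≤ ψ s := hψ (Z s) x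
          have hMs : ψ s ≤ M := hMle s ⟨hs.1.le, hs.2.le⟩
          have hcm : ⟪x, gradient Ψstar (Z s)⟫_ℝ = ⟪gradient Ψstar (Z s), x⟫_ℝ :=
            real_inner_comm _ _
          have hgs' : 0 < ⟪x, X s⟫_ℝ - Ψstar x - M := hgs
          rw [hcm]
          apply mul_nonpos_of_nonneg_of_nonpos (div_pos hR0 hs.1).le
          linarith
      simp only at hkey
      rw [real_inner_comm]
      linarith
    have hle : fconj Ψstar (X t₀) ≤ (M : EReal) := by
      rw [fconj]
      exact iSup_le fun x => by exact_mod_cast key x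
    exact lt_of_le_of_lt hle (EReal.coe_lt_top M)
  have hG0 : ∀ t ∈ Set.Ici (0:ℝ), 0 ≤ F (X t) - F xstar :=
    fun t ht => sub_nonneg.mpr (hxsmin _ (hdom t ht))
  -- the Lyapunov function
  set E : ℝ → ℝ := fun s => s^2/R^2 * (F (X s) - F xstar) +
      (Ψstar (Z s) + c - ⟪xstar, Z s⟫_ℝ) with hEdef
  have hE : ∀ t ∈ Set.Ici (0:ℝ), HasDerivWithinAt E
      ((2*t/R^2) * (F (X t) - F xstar) + t^2/R^2 * ⟪gradient F (X t), X' t⟫_ℝ +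
        (⟪gradient Ψstar (Z t), Z' t⟫_ℝ - ⟪xstar, Z' t⟫_ℝ)) (Set.Ici 0) t := by
    intro t ht
    have hFX : HasDerivWithinAt (fun s => F (X s)) (⟪gradient F (X t), X' t⟫_ℝ)
        (Set.Ici 0) t := by
      have h1 := ((hF.2.1 (X t)).hasFDerivAt).comp_hasDerivWithinAt t (hX t ht)
      rw [fderiv_eq_inner_gradient F hF.2.1] at h1
      exact h1
    have hq : HasDerivWithinAt (fun s : ℝ => s^2/R^2) (2*t/R^2) (Set.Ici 0) t := by
      have := ((hasDerivAt_pow 2 t).div_const (R^2)).hasDerivWithinAt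
        (s := Set.Ici (0:ℝ))
      simpa [pow_one] using this
    have hΨZ : HasDerivWithinAt (fun s => Ψstar (Z s))
        (⟪gradient Ψstar (Z t), Z' t⟫_ℝ) (Set.Ici 0) t := by
      have h1 := ((hΨ.2.1 (Z t)).hasFDerivAt).comp_hasDerivWithinAt t (hZ t ht)
      rw [fderiv_eq_inner_gradient Ψstar hΨ.2.1] at h1
      exact h1
    have hiZ : HasDerivWithinAt (fun s => ⟪xstar, Z s⟫_ℝ) (⟪xstar, Z' t⟫_ℝ)
        (Set.Ici 0) t := by
      have := (innerSL ℝ xstar).hasFDerivAt.comp_hasDerivWithinAt t (hZ t ht)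
      exact this
    have := (hq.mul (hFX.sub_const (F xstar))).add ((hΨZ.add_const c).sub hiZ)
    exact this
  have hE'le : ∀ t, 0 < t →
      (2*t/R^2) * (F (X t) - F xstar) + t^2/R^2 * ⟪gradient F (X t), X' t⟫_ℝ +
        (⟪gradient Ψstar (Z t), Z' t⟫_ℝ - ⟪xstar, Z' t⟫_ℝ) ≤ 0 := by
    intro t ht
    have hG := hG0 t ht.le
    rw [hode1 t ht, hode2 t ht]
    rw [inner_smul_right, inner_sub_right, inner_neg_right, inner_smul_right,
      inner_neg_right, inner_smul_right]
    set G := F (X t) - F xstar with hGdef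
    set a := ⟪gradient F (X t), gradient Ψstar (Z t)⟫_ℝ with ha
    set b := ⟪gradient F (X t), X t⟫_ℝ with hb
    set d := ⟪gradient F (X t), xstar⟫_ℝ with hd
    have hcm1 : ⟪gradient Ψstar (Z t), gradient F (X t)⟫_ℝ = a := real_inner_comm _ _
    have hcm2 : ⟪xstar, gradient F (X t)⟫_ℝ = d := real_inner_comm _ _
    rw [hcm1, hcm2]
    have hconv := hFgrad (X t) xstar
    rw [inner_sub_right] at hconv
    have h1 : d - b ≤ -G := by
      simp only [← hb, ← hd, ← hGdef] at hconv ⊢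
      linarith
    have h2 : (0:ℝ) < t/R := div_pos ht hR0
    have h3 : t/R * (d - b) ≤ t/R * (-G) := mul_le_mul_of_nonneg_left h1 h2.le
    have h4 : 2*t/R^2 * G ≤ t/R * G := by
      rw [div_mul_eq_mul_div, div_mul_eq_mul_div, div_le_div_iff₀ (by positivity) hR0]
      nlinarith [mul_nonneg (mul_nonneg ht.le hG) (mul_nonneg hR0.le (sub_nonneg.mpr hR))]
    have hgoal : 2*t/R^2 * G + t^2/R^2 * (R/t * (a - b)) + (-(t/R * a) - -(t/R * d))
        = 2*t/R^2 * G + t/R * (d - b) := by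
      field_simp
      ring
    rw [hgoal]
    linarith
  have hEcont : ContinuousOn E (Set.Ici 0) := fun t ht => (hE t ht).continuousWithinAt
  have hanti : AntitoneOn E (Set.Ici 0) := by
    apply antitoneOn_of_deriv_nonpos (convex_Ici 0) hEcont
    · intro t ht
      rw [interior_Ici] at ht
      exact ((hE t (Set.mem_Ici.mpr (Set.mem_Ioi.mp ht).le)).hasDerivAt (Ici_mem_nhds ht)).differentiableAt.differentiableWithinAt
    · intro t ht
      rw [interior_Ici] at ht
      rw [((hE t (Set.mem_Ici.mpr (Set.mem_Ioi.mp ht).le)).hasDerivAt (Ici_mem_nhds ht)).deriv]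
      exact hE'le t ht
  intro t ht
  have hEt : E t ≤ E 0 := hanti Set.self_mem_Ici ht.le ht.le
  have hE0 : E 0 = dualDiv Ψstar Z₀ xstar := by
    simp [hEdef, hZ0, dualDiv, hc]
  have hDnn : 0 ≤ Ψstar (Z t) + c - ⟪xstar, Z t⟫_ℝ := by linarith [hfy (Z t)]
  rw [hE0] at hEt
  simp only [hEdef] at hEt
  have hlow : t^2/R^2 * (F (X t) - F xstar) ≤ dualDiv Ψstar Z₀ xstar := by linarith
  rw [le_div_iff₀ (by positivity : (0:ℝ) < t^2)]
  rw [div_mul_eq_mul_div, div_le_iff₀ (by positivity : (0:ℝ) < R^2)] at hlow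
  linarith
end
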